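/- Let 𝒢=(V,E) be a temporal graph, R=(v_1,…,v_k) a route in 𝒢, and x,δ∈ℕ, and let A be the dynamic-programming table defined by A_{R_1}[y]=0 and A_{R_i}[y] = max_{0≤y'≤y} arrival(v_{i−1}, v_i, A_{R_{i−1}}[y'], y−y'). Then R is x-traversal-delay-robust if and only if A_R[x] < ∞. -/

import Mathlib

/-- A time arc of a temporal graph: start vertex, end vertex, time label, traversal time. -/
structure TimeArc (V : Type) where
  src : V
  dst : V
  time : ℕ
  trav : ℕ
deriving DecidableEq

variable {V : Type}

/-- `P` is a `D`-traversal-delayed temporal walk in the temporal graph with time-arc set `E`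
(with delay time `δ`). -/
def IsTDWalk [DecidableEq V] (E D : Finset (TimeArc V)) (δ : ℕ)
    (P : List (TimeArc V)) : Prop :=
  (∀ e ∈ P, e ∈ E) ∧
  P.Chain' (fun e f => f.src = e.dst ∧
    e.time + e.trav + (if e ∈ D then δ else 0) ≤ f.time)

/-- `P` is a `D`-starting-delayed temporal walk in the temporal graph with time-arc set `E`
(with delay time `δ`). -/
def IsSDWalk [DecidableEq V] (E D : Finset (TimeArc V)) (δ : ℕ)
    (P : List (TimeArc V)) : Prop :=
  (∀ e ∈ P, e ∈ E) ∧
  P.Chain' (fun e f => f.src = e.dst ∧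
    e.time + e.trav + (if e ∈ D then δ else 0) ≤ f.time + (if f ∈ D then δ else 0))

/-- The sequence of vertices visited by a walk: the start vertex of its first arc followed by
the end vertices of all its arcs. -/
def visits : List (TimeArc V) → List V
  | [] => []
  | e :: es => e.src :: (e :: es).map TimeArc.dst

/-- The walk `P` follows the route `R`: the visited vertex sequence of `P` equals `R`
(the empty walk follows every single-vertex route). -/
def Follows (P : List (TimeArc V)) (R : List V) : Prop :=
  match P with
  | [] => ∃ v, R = [v]
  | e :: es => visits (e :: es) = R

/-- `R` is a `D`-traversal-delayed route: some `D`-traversal-delayed temporal walk follows `R`. -/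
def IsTDRoute [DecidableEq V] (E D : Finset (TimeArc V)) (δ : ℕ) (R : List V) : Prop :=
  ∃ P : List (TimeArc V), IsTDWalk E D δ P ∧ Follows P R

/-- `R` is a `D`-starting-delayed route: some `D`-starting-delayed temporal walk follows `R`. -/
def IsSDRoute [DecidableEq V] (E D : Finset (TimeArc V)) (δ : ℕ) (R : List V) : Prop :=
  ∃ P : List (TimeArc V), IsSDWalk E D δ P ∧ Follows P R

/-- `R` is `x`-traversal-delay-robust: it is a `D`-traversal-delayed route for every
`D ⊆ E` with `|D| ≤ x`. -/
def TDRobust [DecidableEq V] (E : Finset (TimeArc V)) (δ x : ℕ) (R : List V) : Prop :=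
  ∀ D : Finset (TimeArc V), D ⊆ E → D.card ≤ x → IsTDRoute E D δ R

/-- `R` is `x`-starting-delay-robust: it is a `D`-starting-delayed route for every
`D ⊆ E` with `|D| ≤ x`. -/
def SDRobust [DecidableEq V] (E : Finset (TimeArc V)) (δ x : ℕ) (R : List V) : Prop :=
  ∀ D : Finset (TimeArc V), D ⊆ E → D.card ≤ x → IsSDRoute E D δ R

/-- The function `arrival(v, w, t, y)`: worst-case single-step delayed arrival time from `v`
to `w` when starting at time `t` with up to `y` delays. It is `∞` if `t = ∞` or
`E(v,w,t) = ∅`; otherwise it equals `min (t(a₁)+λ(a₁)+δ) (t(a_{y+1})+λ(a_{y+1}))` where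
`a₁, …, a_ℓ` lists `E(v,w,t)` in nondecreasing order of arrival time, the second term being
omitted if `ℓ ≤ y`. -/
noncomputable def arrivalFn [DecidableEq V] (E : Finset (TimeArc V)) (δ : ℕ) (v w : V)
    (t : ℕ∞) (y : ℕ) : ℕ∞ :=
  if t = ⊤ then ⊤
  else
    let t0 : ℕ := WithTop.untopD 0 t
    let S : List ℕ :=
      ((E.filter (fun a => a.src = v ∧ a.dst = w ∧ t0 ≤ a.time)).val.map
        (fun a => a.time + a.trav)).sort (· ≤ ·)
    match S, S[y]? with
    | [], _ => ⊤
    | a :: _, some b => min ((a + δ : ℕ) : ℕ∞) ((b : ℕ) : ℕ∞)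
    | a :: _, none => ((a + δ : ℕ) : ℕ∞)

/-- The dynamic-programming table, computed on the *reversed* route:
`dpRev E δ (Rⱼ.reverse) y` is the table entry `A_{Rⱼ}[y]`; the base case is
`A_{R₁}[y] = 0` and `A_{Rᵢ}[y] = max_{0 ≤ y' ≤ y} arrival(v_{i-1}, v_i, A_{R_{i-1}}[y'], y - y')`. -/
noncomputable def dpRev [DecidableEq V] (E : Finset (TimeArc V)) (δ : ℕ) : List V → ℕ → ℕ∞
  | [], _ => 0
  | [_], _ => 0
  | w :: v :: rest, y =>
      (Finset.range (y + 1)).sup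
        (fun y' => arrivalFn E δ v w (dpRev E δ (v :: rest) y') (y - y'))

/-!
For a fixed delay set `D`, the greedy walk along a route is optimal: at each hop it takes the arc of
earliest delayed arrival among those departing after the current time (`earliestArr`). A single hop
is settled by `arrivalFn`. With `y` delays the adversary delays the arcs that arrive before
`arrivalFn` (at most `y` of them), and no arc of the hop then arrives before `arrivalFn`; composing
hops gives a `D` with `|D| ≤ x` against which no walk beats `dpRev R x`. Conversely, against any
`D` the greedy hop arrives no later than `arrivalFn` charged only with the arcs of `D` departing
between the previous and the new greedy arrival. These time intervals are disjoint, so the greedy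
walk arrives by `dpRev R |D|`, and `dpRev R x < ∞` exactly when every such `D` leaves a walk.
-/

open Finset

theorem List.Pairwise.countP_lt_le_iff {α : Type*} [LinearOrder α] {S : List α}
    (hS : S.Pairwise (· ≤ ·)) (c : α) (y : ℕ) :
    S.countP (· < c) ≤ y ↔ ∀ b ∈ S[y]?, c ≤ b := by
  induction S generalizing y with
  | nil => simp
  | cons a l ih =>
    obtain ⟨ha, hl⟩ := List.pairwise_cons.1 hS
    rcases lt_or_ge a c with hac | hca
    · cases y with
      | zero => simp [hac]
      | succ y => simp [hac, ih hl y]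
    · have hge : ∀ b ∈ a :: l, c ≤ b := by
        simpa using ⟨hca, fun b hb => hca.trans (ha b hb)⟩
      have hzero : (a :: l).countP (· < c) = 0 :=
        List.countP_eq_zero.2 fun b hb => by simpa using hge b hb
      simpa [hzero] using fun b hb => hge b (List.mem_of_getElem? hb)

namespace TimeArc

def arrTime (e : TimeArc V) : ℕ := e.time + e.trav

lemma time_le_arrTime (e : TimeArc V) : e.time ≤ e.arrTime :=
  Nat.le_add_right _ _

variable [DecidableEq V]

def delayedArrTime (e : TimeArc V) (D : Finset (TimeArc V)) (δ : ℕ) : ℕ :=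
  e.arrTime + if e ∈ D then δ else 0

lemma delayedArrTime_mono {e : TimeArc V} {D D' : Finset (TimeArc V)} {δ : ℕ} (h : D ⊆ D') :
    e.delayedArrTime D δ ≤ e.delayedArrTime D' δ := by
  have : (if e ∈ D then δ else 0) ≤ if e ∈ D' then δ else 0 := by
    by_cases h₁ : e ∈ D
    · simp [h₁, h h₁]
    · simp [h₁]
  exact Nat.add_le_add_left this _

lemma arrTime_le_delayedArrTime (e : TimeArc V) (D : Finset (TimeArc V)) (δ : ℕ) :
    e.arrTime ≤ e.delayedArrTime D δ :=
  Nat.le_add_right _ _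

lemma delayedArrTime_le (e : TimeArc V) (D : Finset (TimeArc V)) (δ : ℕ) :
    e.delayedArrTime D δ ≤ e.arrTime + δ := by
  unfold delayedArrTime
  split_ifs <;> simp

end TimeArc

section Arrival

variable [DecidableEq V] {E : Finset (TimeArc V)} {δ : ℕ} {v w : V}

variable (E v w) in
def window (t : ℕ∞) : Finset (TimeArc V) :=
  E.filter fun a => a.src = v ∧ a.dst = w ∧ t ≤ a.time

@[simp] lemma window_top : window E v w ⊤ = ∅ := by simp [window]

lemma window_anti {t t' : ℕ∞} (h : t ≤ t') : window E v w t' ⊆ window E v w t := by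
  intro e
  simp only [window, mem_filter]
  exact fun ⟨hE, hv, hw, ht⟩ => ⟨hE, hv, hw, h.trans ht⟩

lemma natCast_le_arrivalFn_iff (t : ℕ∞) (c y : ℕ) : (c : ℕ∞) ≤ arrivalFn E δ v w t y ↔
      (∀ e ∈ window E v w t, c ≤ e.arrTime + δ) ∧ #{e ∈ window E v w t | e.arrTime < c} ≤ y := by
  induction t using ENat.recTopCoe with
  | top => simp [arrivalFn]
  | coe t0 =>
    have hW : E.filter (fun a => a.src = v ∧ a.dst = w ∧ t0 ≤ a.time) = window E v w t0 := by
      ext; simp [window]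
    unfold arrivalFn
    simp only [ENat.natCast_ne_top, if_false]
    rw [show WithTop.untopD 0 (t0 : ℕ∞) = t0 from rfl, hW,
      show (fun a : TimeArc V => a.time + a.trav) = TimeArc.arrTime from rfl]
    set W := window E v w t0
    have hsorted := Multiset.pairwise_sort (W.val.map TimeArc.arrTime) (· ≤ ·)
    have hmem (b : ℕ) := Multiset.mem_sort (a := b) (s := W.val.map TimeArc.arrTime) (· ≤ ·)
    have hcard : #{e ∈ W | e.arrTime < c} = (W.val.map TimeArc.arrTime).countP (· < c) := by
      rw [Multiset.countP_map]; rfl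
    rw [← Multiset.sort_eq (W.val.map TimeArc.arrTime) (· ≤ ·), Multiset.coe_countP] at hcard
    rw [hcard]
    generalize (W.val.map TimeArc.arrTime).sort (· ≤ ·) = S at hsorted hmem hcard ⊢
    rcases S with _ | ⟨a, l⟩
    · have hWempty : ∀ e ∈ W, False := fun e he => by
        simpa using (hmem _).2 (Multiset.mem_map_of_mem _ he)
      simp only [le_top, true_iff]
      exact ⟨fun e he => (hWempty e he).elim, by simp⟩
    · have hmin : c ≤ a + δ ↔ ∀ e ∈ W, c ≤ e.arrTime + δ := by
        have ha (e) (he : e ∈ W) : a ≤ e.arrTime :=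
          (List.mem_cons.1 ((hmem _).2 (Multiset.mem_map_of_mem _ he))).elim ge_of_eq
            ((List.pairwise_cons.1 hsorted).1 _)
        refine ⟨fun h e he => h.trans (Nat.add_le_add_right (ha e he) δ), fun h => ?_⟩
        obtain ⟨e, he, rfl⟩ := Multiset.mem_map.1 ((hmem a).1 List.mem_cons_self)
        exact h e he
      rw [hsorted.countP_lt_le_iff, ← hmin]
      cases (a :: l)[y]? <;> simp only [le_min_iff, Nat.cast_le, Option.mem_def, reduceCtorEq,
        IsEmpty.forall_iff, implies_true, and_true, Option.some.injEq, forall_eq']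

lemma arrivalFn_mono {t t' : ℕ∞} {y y' : ℕ} (ht : t ≤ t') (hy : y ≤ y') :
    arrivalFn E δ v w t y ≤ arrivalFn E δ v w t' y' := by
  refine ENat.forall_natCast_le_iff_le.1 fun c hc => ?_
  obtain ⟨hδ, hcard⟩ := (natCast_le_arrivalFn_iff t c y).1 hc
  refine (natCast_le_arrivalFn_iff t' c y').2 ⟨fun e he => hδ e (window_anti ht he), ?_⟩
  exact (card_le_card (filter_subset_filter _ (window_anti ht))).trans (hcard.trans hy)

lemma arrivalFn_le_arrTime_add {t : ℕ∞} {e : TimeArc V} (he : e ∈ window E v w t) (y : ℕ) :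
    arrivalFn E δ v w t y ≤ (e.arrTime + δ : ℕ) := by
  by_contra! h
  have hc : ((e.arrTime + δ + 1 : ℕ) : ℕ∞) ≤ arrivalFn E δ v w t y := by
    exact_mod_cast Order.add_one_le_of_lt h
  have := ((natCast_le_arrivalFn_iff t _ y).1 hc).1 e he
  omega

lemma card_filter_arrTime_lt_arrivalFn_le (t : ℕ∞) (y : ℕ) :
    #{e ∈ window E v w t | (e.arrTime : ℕ∞) < arrivalFn E δ v w t y} ≤ y := by
  induction h : arrivalFn E δ v w t y using ENat.recTopCoe with
  | top =>
    have hW : window E v w t = ∅ := eq_empty_of_forall_notMem fun e he => by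
      simpa [h] using arrivalFn_le_arrTime_add (δ := δ) he y
    simp [hW]
  | coe c =>
    simpa using ((natCast_le_arrivalFn_iff t c y).1 h.ge).2

lemma exists_delays_arrivalFn_le (t : ℕ∞) (z : ℕ) :
    ∃ D ⊆ window E v w t, #D ≤ z ∧
      ∀ e ∈ window E v w t, arrivalFn E δ v w t z ≤ e.delayedArrTime D δ := by
  refine ⟨{e ∈ window E v w t | (e.arrTime : ℕ∞) < arrivalFn E δ v w t z}, filter_subset _ _,
    card_filter_arrTime_lt_arrivalFn_le t z, fun e he => ?_⟩
  by_cases heD : (e.arrTime : ℕ∞) < arrivalFn E δ v w t z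
  · simpa [TimeArc.delayedArrTime, he, heD] using arrivalFn_le_arrTime_add he z
  · have heD' : e ∉ {e ∈ window E v w t | (e.arrTime : ℕ∞) < arrivalFn E δ v w t z} := by
      simp [heD]
    simpa [TimeArc.delayedArrTime, heD'] using not_lt.1 heD

lemma le_arrivalFn_of_forall_le {D : Finset (TimeArc V)} {t s : ℕ∞}
    (hs : ∀ e ∈ window E v w t, s ≤ e.delayedArrTime D δ) :
    s ≤ arrivalFn E δ v w t #{e ∈ D | t ≤ e.time ∧ (e.time : ℕ∞) < s} := by
  refine ENat.forall_natCast_le_iff_le.1 fun c hc => (natCast_le_arrivalFn_iff t c _).2 ⟨?_, ?_⟩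
  · intro e he
    have : (c : ℕ∞) ≤ (e.arrTime + δ : ℕ) :=
      hc.trans ((hs e he).trans (by exact_mod_cast e.delayedArrTime_le D δ))
    exact_mod_cast this
  · refine card_le_card fun e he => ?_
    obtain ⟨heW, hec⟩ := mem_filter.1 he
    obtain ⟨heE, -, -, het⟩ := mem_filter.1 heW
    have hcs : (e.arrTime : ℕ∞) < s := (Nat.cast_lt.2 hec).trans_le hc
    have heD : e ∈ D := by
      by_contra heD
      have := hs e heW
      simp only [TimeArc.delayedArrTime, heD, if_false, add_zero] at this
      exact this.not_gt hcs
    refine mem_filter.2 ⟨heD, het, lt_of_le_of_lt ?_ hcs⟩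
    exact_mod_cast e.time_le_arrTime

end Arrival

lemma follows_iff {P : List (TimeArc V)} {R : List V} :
    Follows P R ↔ ∃ u, R = u :: P.map TimeArc.dst ∧ ∀ e ∈ P.head?, e.src = u := by
  cases P with
  | nil => simp [Follows, eq_comm]
  | cons e es =>
    simp only [Follows, visits, List.head?_cons, Option.mem_def, Option.some.injEq, forall_eq']
    constructor
    · rintro rfl
      exact ⟨e.src, rfl, rfl⟩
    · rintro ⟨u, rfl, rfl⟩
      rfl

section Walks

variable [DecidableEq V] {E D : Finset (TimeArc V)} {δ : ℕ}

def walkArrTime (D : Finset (TimeArc V)) (δ : ℕ) (P : List (TimeArc V)) : ℕ :=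
  (P.getLast?.map (·.delayedArrTime D δ)).getD 0

lemma isTDWalk_iff {P : List (TimeArc V)} :
    IsTDWalk E D δ P ↔ (∀ e ∈ P, e ∈ E) ∧
      P.IsChain fun e f => f.src = e.dst ∧ e.delayedArrTime D δ ≤ f.time :=
  Iff.rfl

lemma isTDWalk_append_singleton_iff {P : List (TimeArc V)} {e : TimeArc V} :
    IsTDWalk E D δ (P ++ [e]) ↔ IsTDWalk E D δ P ∧ e ∈ E ∧
      (∀ f ∈ P.getLast?, e.src = f.dst) ∧ walkArrTime D δ P ≤ e.time := by
  simp only [isTDWalk_iff, List.isChain_append, List.isChain_singleton, List.mem_append,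
    List.mem_singleton, or_imp, forall_and, forall_eq, List.head?_cons, Option.mem_def,
    Option.some.injEq, forall_eq', walkArrTime]
  cases P.getLast? <;>
    simp only [reduceCtorEq, IsEmpty.forall_iff, implies_true, and_self, and_true, Option.map_none,
      Option.getD_none, zero_le, Option.some.injEq, forall_eq', true_and, Option.map_some,
      Option.getD_some] <;>
    tauto

lemma isTDWalk_follows_append_singleton_iff {P : List (TimeArc V)} {e : TimeArc V}
    {Q : List V} {w : V} :
    IsTDWalk E D δ (P ++ [e]) ∧ Follows (P ++ [e]) (Q ++ [w]) ↔
      (IsTDWalk E D δ P ∧ Follows P Q) ∧ e ∈ E ∧ Q.getLast? = some e.src ∧ e.dst = w ∧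
        walkArrTime D δ P ≤ e.time := by
  rw [isTDWalk_append_singleton_iff, follows_iff, follows_iff]
  simp only [List.map_append, List.map_singleton, ← List.cons_append, List.append_singleton_inj,
    List.head?_append]
  rcases P.eq_nil_or_concat' with rfl | ⟨P, f, rfl⟩
  · simp only [List.getLast?_nil, Option.mem_def, reduceCtorEq, IsEmpty.forall_iff, implies_true,
      true_and, List.map_nil, List.head?_nil, List.head?_cons, Option.or_some, Option.getD_none,
      Option.some.injEq, forall_eq', exists_eq_right', and_true]
    constructor
    · rintro ⟨⟨hW, heE, ht⟩, rfl, rfl⟩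
      exact ⟨⟨hW, _, rfl⟩, heE, rfl, rfl, ht⟩
    · rintro ⟨⟨hW, u, rfl⟩, heE, hsrc, rfl, ht⟩
      obtain rfl : u = e.src := by simpa using hsrc
      exact ⟨⟨hW, heE, ht⟩, rfl, rfl⟩
  · simp only [List.getLast?_append, List.getLast?_singleton, Option.some_or, Option.mem_def,
      Option.some.injEq, forall_eq', List.map_append, List.map_cons, List.map_nil,
      List.head?_append, List.head?_cons, Option.or_some, Option.getD_some, exists_eq_right']
    constructor
    · rintro ⟨⟨hW, heE, hsrc, ht⟩, rfl, rfl⟩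
      exact ⟨⟨hW, rfl⟩, heE, by rw [← List.cons_append, List.getLast?_concat, hsrc], rfl, ht⟩
    · rintro ⟨⟨hW, rfl⟩, heE, hsrc, rfl, ht⟩
      rw [← List.cons_append, List.getLast?_concat, Option.some_inj] at hsrc
      exact ⟨⟨hW, heE, hsrc.symm, ht⟩, rfl, rfl⟩

end Walks

section EarliestArrival

variable [DecidableEq V] {E D : Finset (TimeArc V)} {δ : ℕ}

-- As in `dpRev`, the route is reversed: `w :: v :: rest` ends with the hop from `v` to `w`.
variable (E D δ) in
noncomputable def earliestArr : List V → ℕ∞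
  | [] => 0
  | [_] => 0
  | w :: v :: rest =>
      (window E v w (earliestArr (v :: rest))).inf fun e => (e.delayedArrTime D δ : ℕ∞)

lemma earliestArr_le_cons_cons (v w : V) (rest : List V) :
    earliestArr E D δ (v :: rest) ≤ earliestArr E D δ (w :: v :: rest) := by
  refine Finset.le_inf fun e he => ?_
  obtain ⟨-, -, -, he⟩ := mem_filter.1 he
  exact he.trans (Nat.cast_le.2 (e.time_le_arrTime.trans (e.arrTime_le_delayedArrTime D δ)))

lemma earliestArr_mono {D D' : Finset (TimeArc V)} (h : D ⊆ D') :
    ∀ rl : List V, earliestArr E D δ rl ≤ earliestArr E D' δ rl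
  | [] | [_] => le_rfl
  | w :: v :: rest => by
    refine Finset.le_inf fun e he => ?_
    have he' := window_anti (earliestArr_mono h (v :: rest)) he
    exact (inf_le he').trans (by exact_mod_cast TimeArc.delayedArrTime_mono h)

lemma exists_walk_le_iff_earliestArr_le :
    ∀ rl : List V, rl ≠ [] → ∀ t : ℕ,
      (∃ P, IsTDWalk E D δ P ∧ Follows P rl.reverse ∧ walkArrTime D δ P ≤ t) ↔
        earliestArr E D δ rl ≤ t
  | [], h, _ => absurd rfl h
  | [u], _, t => by
    refine iff_of_true ⟨[], ⟨by simp, List.isChain_nil⟩, ⟨u, rfl⟩, Nat.zero_le t⟩ ?_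
    simp [earliestArr]
  | w :: v :: rest, _, t => by
    have ih := exists_walk_le_iff_earliestArr_le (v :: rest) (List.cons_ne_nil _ _)
    have hlast : (v :: rest).reverse.getLast? = some v := by simp
    rw [List.reverse_cons, earliestArr, Finset.inf_le_iff (ENat.natCast_lt_top t)]
    constructor
    · rintro ⟨P, hW, hF, ht⟩
      obtain ⟨P, e, rfl⟩ : ∃ P₀ e, P = P₀ ++ [e] := by
        refine P.eq_nil_or_concat'.resolve_left ?_
        rintro rfl
        obtain ⟨u, hu⟩ := hF
        simpa using congrArg List.length hu
      obtain ⟨⟨hW₀, hF₀⟩, heE, hsrc, hdst, hle⟩ :=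
        isTDWalk_follows_append_singleton_iff.1 ⟨hW, hF⟩
      refine ⟨e, mem_filter.2 ⟨heE, ?_, hdst, (ih e.time).1 ⟨P, hW₀, hF₀, hle⟩⟩, ?_⟩
      · simpa [hlast] using hsrc.symm
      · simpa [walkArrTime] using ht
    · rintro ⟨e, he, ht⟩
      obtain ⟨heE, hsrc, hdst, hte⟩ := mem_filter.1 he
      obtain ⟨P, hW, hF, hP⟩ := (ih e.time).2 hte
      obtain ⟨hW', hF'⟩ := isTDWalk_follows_append_singleton_iff.2
        ⟨⟨hW, hF⟩, heE, hsrc ▸ hlast, hdst, hP⟩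
      exact ⟨P ++ [e], hW', hF', by simpa [walkArrTime] using ht⟩

lemma isTDRoute_reverse_iff {rl : List V} (hrl : rl ≠ []) :
    IsTDRoute E D δ rl.reverse ↔ earliestArr E D δ rl < ⊤ := by
  constructor
  · rintro ⟨P, hW, hF⟩
    exact ((exists_walk_le_iff_earliestArr_le rl hrl _).1 ⟨P, hW, hF, le_rfl⟩).trans_lt
      (ENat.natCast_lt_top _)
  · intro h
    obtain ⟨t, ht⟩ := ENat.ne_top_iff_exists.1 h.ne
    obtain ⟨P, hW, hF, -⟩ := (exists_walk_le_iff_earliestArr_le rl hrl t).2 ht.ge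
    exact ⟨P, hW, hF⟩

end EarliestArrival

section DynamicProgram

variable [DecidableEq V] {E : Finset (TimeArc V)} {δ : ℕ}

lemma arrivalFn_le_dpRev {v w : V} {rest : List V} {y y' : ℕ} (h : y' ≤ y) :
    arrivalFn E δ v w (dpRev E δ (v :: rest) y') (y - y') ≤ dpRev E δ (w :: v :: rest) y := by
  rw [dpRev]
  exact le_sup (f := fun y' => arrivalFn E δ v w (dpRev E δ (v :: rest) y') (y - y'))
    (mem_range.2 (Nat.lt_succ_of_le h))

lemma exists_dpRev_eq_arrivalFn (v w : V) (rest : List V) (y : ℕ) :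
    ∃ y' ≤ y, dpRev E δ (w :: v :: rest) y =
      arrivalFn E δ v w (dpRev E δ (v :: rest) y') (y - y') := by
  obtain ⟨y', hy', heq⟩ := exists_mem_eq_sup (range (y + 1))
    (nonempty_range_iff.2 (Nat.succ_ne_zero y))
    fun y' => arrivalFn E δ v w (dpRev E δ (v :: rest) y') (y - y')
  exact ⟨y', Nat.lt_succ_iff.1 (mem_range.1 hy'), by rw [dpRev]; exact heq⟩

lemma dpRev_mono (rl : List V) : Monotone (dpRev E δ rl) := by
  intro y y' h
  match rl with
  | [] | [_] => simp [dpRev]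
  | w :: v :: rest =>
    rw [dpRev]
    refine Finset.sup_le fun b hb => ?_
    have hb' : b ≤ y := Nat.lt_succ_iff.1 (mem_range.1 hb)
    exact (arrivalFn_mono le_rfl (Nat.sub_le_sub_right h b)).trans
      (arrivalFn_le_dpRev (hb'.trans h))

theorem exists_delays_dpRev_le_earliestArr (E : Finset (TimeArc V)) (δ : ℕ) :
    ∀ (rl : List V) (y : ℕ), ∃ D ⊆ E, #D ≤ y ∧ dpRev E δ rl y ≤ earliestArr E D δ rl
  | [], _ | [_], _ => ⟨∅, empty_subset _, by simp, by simp [dpRev]⟩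
  | w :: v :: rest, y => by
    obtain ⟨y', hy', hdp⟩ := exists_dpRev_eq_arrivalFn (E := E) (δ := δ) v w rest y
    obtain ⟨D₀, hD₀E, hD₀y, hD₀⟩ := exists_delays_dpRev_le_earliestArr E δ (v :: rest) y'
    obtain ⟨D₁, hD₁W, hD₁z, hD₁⟩ :=
      exists_delays_arrivalFn_le (E := E) (δ := δ) (v := v) (w := w) (dpRev E δ (v :: rest) y')
        (y - y')
    refine ⟨D₀ ∪ D₁, union_subset hD₀E (hD₁W.trans (filter_subset _ _)),
      (card_union_le _ _).trans (by omega), ?_⟩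
    rw [hdp, earliestArr]
    refine Finset.le_inf fun e he => ?_
    have heW := window_anti (hD₀.trans (earliestArr_mono subset_union_left (v :: rest))) he
    exact (hD₁ e heW).trans (by exact_mod_cast TimeArc.delayedArrTime_mono subset_union_right)

theorem earliestArr_le_dpRev (D : Finset (TimeArc V)) :
    ∀ rl : List V,
      earliestArr E D δ rl ≤ dpRev E δ rl #{e ∈ D | (e.time : ℕ∞) < earliestArr E D δ rl}
  | [] | [_] => by simp [earliestArr]
  | w :: v :: rest => by
    set t := earliestArr E D δ (v :: rest)
    set t' := earliestArr E D δ (w :: v :: rest)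
    set n₀ := #{e ∈ D | (e.time : ℕ∞) < t}
    set n := #{e ∈ D | t ≤ e.time ∧ (e.time : ℕ∞) < t'}
    have htt' : t ≤ t' := earliestArr_le_cons_cons v w rest
    have hcard : n₀ + n = #{e ∈ D | (e.time : ℕ∞) < t'} := by
      rw [← card_union_of_disjoint (disjoint_filter.2 fun e _ h₁ h₂ => h₂.1.not_gt h₁),
        ← filter_or]
      congr 1
      refine filter_congr fun e _ => ⟨?_, fun h => (lt_or_ge _ t).imp_right fun h' => ⟨h', h⟩⟩
      rintro (h | ⟨-, h⟩)
      exacts [h.trans_le htt', h]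
    calc t' ≤ arrivalFn E δ v w t n := le_arrivalFn_of_forall_le fun e he => inf_le he
      _ ≤ arrivalFn E δ v w (dpRev E δ (v :: rest) n₀) n :=
        arrivalFn_mono (earliestArr_le_dpRev D (v :: rest)) le_rfl
      _ ≤ dpRev E δ (w :: v :: rest) (n₀ + n) := by
        simpa using arrivalFn_le_dpRev (rest := rest) (Nat.le_add_right n₀ n)
      _ = _ := by rw [hcard]

end DynamicProgram

theorem statement9 {V : Type} [DecidableEq V] (E : Finset (TimeArc V))
    (δ x : ℕ) (R : List V) (hR : R ≠ []) :
    TDRobust E δ x R ↔ dpRev E δ R.reverse x < ⊤ := by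
  have hrl : R.reverse ≠ [] := List.reverse_ne_nil_iff.2 hR
  constructor
  · intro hrob
    obtain ⟨D, hDE, hDx, hdp⟩ := exists_delays_dpRev_le_earliestArr E δ R.reverse x
    have hroute := hrob D hDE hDx
    rw [← R.reverse_reverse, isTDRoute_reverse_iff hrl] at hroute
    exact hdp.trans_lt hroute
  · intro hdp D _ hDx
    rw [← R.reverse_reverse, isTDRoute_reverse_iff hrl]
    calc earliestArr E D δ R.reverse
        ≤ dpRev E δ R.reverse #{e ∈ D | (e.time : ℕ∞) < earliestArr E D δ R.reverse} :=
          earliestArr_le_dpRev D _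
      _ ≤ dpRev E δ R.reverse x := dpRev_mono _ ((card_filter_le _ _).trans hDx)
      _ < ⊤ := hdp
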